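/- arXiv:2308.15760 — 2 statements merged into one kernel-verified Lean document; each statement's English description precedes it below -/
import Mathlib

section
/- Let f : ℝⁿ → ℝ ∪ {+∞} be finite and locally lower semicontinuous at x̄, let θ ∈ [0,1), and set g(x) := (max{f(x) − f(x̄), 0})^{1−θ}. Then the Kurdyka–Łojasiewicz modulus KŁ(f, x̄, θ) := liminf over x → x̄ with f(x) → f(x̄) and f(x) > f(x̄) of (1−θ) d(0, ∂f(x)) / (f(x) − f(x̄))^θ equals d(0, ∂^> g(x̄)). -/
open Filter Topology
open scoped ENNReal NNReal Pointwise

noncomputable section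

abbrev En (n : ℕ) := EuclideanSpace ℝ (Fin n)

/-- Regular (Fréchet) subgradients of an extended-real-valued function. -/
def RegSubgrad {n : ℕ} (f : En n → EReal) (x : En n) : Set (En n) :=
  {v | ∀ ε : ℝ, 0 < ε → ∃ δ : ℝ, 0 < δ ∧ ∀ u : En n, ‖u - x‖ < δ → u ≠ x →
      f x + (((inner ℝ v (u - x) : ℝ) - ε * ‖u - x‖ : ℝ) : EReal) ≤ f u}

/-- Limiting (Mordukhovich) subgradients. -/
def LimSubgrad {n : ℕ} (f : En n → EReal) (x : En n) : Set (En n) :=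
  {v | ∃ xk vk : ℕ → En n,
      Tendsto xk atTop (nhds x) ∧ Tendsto vk atTop (nhds v) ∧
      Tendsto (fun k => f (xk k)) atTop (nhds (f x)) ∧
      ∀ k, vk k ∈ RegSubgrad f (xk k)}

/-- Outer limiting subgradients: limits of limiting subgradients taken at nearby
points where the function value is strictly larger and converges to `f x`. -/
def OuterSubgrad {n : ℕ} (f : En n → EReal) (x : En n) : Set (En n) :=
  {v | ∃ xk vk : ℕ → En n,
      Tendsto xk atTop (nhds x) ∧ Tendsto vk atTop (nhds v) ∧
      Tendsto (fun k => f (xk k)) atTop (nhds (f x)) ∧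
      (∀ k, f x < f (xk k)) ∧ ∀ k, vk k ∈ LimSubgrad f (xk k)}

/-- Distance from the origin to a set (`∞` for the empty set). -/
def DistZero {n : ℕ} (S : Set (En n)) : ℝ≥0∞ := EMetric.infEdist 0 S

/-- `f` is locally lower semicontinuous at `x`. -/
def LocallyLsc {n : ℕ} (f : En n → EReal) (x : En n) : Prop :=
  ∃ ε : ℝ, 0 < ε ∧ ∀ α : ℝ, (α : EReal) ≤ f x + (ε : ℝ) →
    IsClosed {y : En n | ‖y - x‖ ≤ ε ∧ f y ≤ (α : ℝ)}

/-! On `{f > c}` the function `g` is `φ ∘ f` with `φ t = (t - c) ^ (1 - θ)`, a smooth increasing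
bijection of `(c, ∞)` onto `(0, ∞)`. Applying the chain rule for limiting subgradients to `φ` and
to `φ⁻¹` gives `∂g(x) = φ'(f x) • ∂f(x)` there, so the KŁ quotient at `x` is exactly
`d(0, ∂g(x))`; and `f x ↓ c` if and only if `g x ↓ 0`. This reduces the theorem to the identity
`liminf_{y → x̄, G y ↓ G x̄} d(0, ∂G(y)) = d(0, ∂^> G(x̄))`, valid for any `G`, whose nontrivial
inequality comes from extracting a convergent subsequence of almost minimal subgradients. -/

section

variable {n : ℕ}

lemma mem_limSubgrad_of_eventually {f : En n → EReal} {x v : En n} {xk vk : ℕ → En n}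
    (hx : Tendsto xk atTop (𝓝 x)) (hv : Tendsto vk atTop (𝓝 v))
    (hf : Tendsto (fun k => f (xk k)) atTop (𝓝 (f x)))
    (hreg : ∀ᶠ k in atTop, vk k ∈ RegSubgrad f (xk k)) :
    v ∈ LimSubgrad f x := by
  obtain ⟨N, hN⟩ := eventually_atTop.mp hreg
  have hshift := tendsto_add_atTop_nat N
  exact ⟨fun k => xk (k + N), fun k => vk (k + N), hx.comp hshift, hv.comp hshift,
    hf.comp hshift, fun k => hN _ (Nat.le_add_left N k)⟩

lemma tendsto_nhds_inf_comap_nhdsGT_iff {G : En n → EReal} {x : En n} {xk : ℕ → En n} :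
    Tendsto xk atTop (𝓝 x ⊓ comap G (𝓝[>] (G x))) ↔
      Tendsto xk atTop (𝓝 x) ∧ Tendsto (fun k => G (xk k)) atTop (𝓝 (G x)) ∧
        ∀ᶠ k in atTop, G x < G (xk k) := by
  simp only [tendsto_inf, tendsto_comap_iff, tendsto_nhdsWithin_iff, Function.comp_def,
    Set.mem_Ioi]

lemma mem_outerSubgrad_of_tendsto {G : En n → EReal} {x v : En n} {xk vk : ℕ → En n}
    (hx : Tendsto xk atTop (𝓝 x ⊓ comap G (𝓝[>] (G x)))) (hv : Tendsto vk atTop (𝓝 v))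
    (hlim : ∀ᶠ k in atTop, vk k ∈ LimSubgrad G (xk k)) :
    v ∈ OuterSubgrad G x := by
  obtain ⟨hx, hG, hgt⟩ := tendsto_nhds_inf_comap_nhdsGT_iff.mp hx
  obtain ⟨N, hN⟩ := eventually_atTop.mp (hgt.and hlim)
  have hshift := tendsto_add_atTop_nat N
  exact ⟨fun k => xk (k + N), fun k => vk (k + N), hx.comp hshift, hv.comp hshift,
    hG.comp hshift, fun k => (hN _ (Nat.le_add_left N k)).1,
    fun k => (hN _ (Nat.le_add_left N k)).2⟩

lemma tendsto_of_mem_outerSubgrad {G : En n → EReal} {x v : En n} (hv : v ∈ OuterSubgrad G x) :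
    ∃ xk vk : ℕ → En n, Tendsto xk atTop (𝓝 x ⊓ comap G (𝓝[>] (G x))) ∧
      Tendsto vk atTop (𝓝 v) ∧ ∀ k, vk k ∈ LimSubgrad G (xk k) := by
  obtain ⟨xk, vk, hx, hv, hG, hgt, hlim⟩ := hv
  exact ⟨xk, vk, tendsto_nhds_inf_comap_nhdsGT_iff.mpr ⟨hx, hG, .of_forall hgt⟩, hv, hlim⟩

lemma smul_mem_regSubgrad_of_hasDerivAt {f h : En n → EReal} {φ : ℝ → ℝ} {r a : ℝ}
    {I : Set ℝ} {x v : En n} (hφ : HasDerivAt φ r a) (hI : I ∈ 𝓝 a) (hfx : f x = a)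
    (hhx : h x = φ a) (hle : ∀ u, ∀ t ∈ I, (t : EReal) ≤ f u → (φ t : EReal) ≤ h u)
    (hv : v ∈ RegSubgrad f x) :
    r • v ∈ RegSubgrad h x := by
  intro ε hε
  set η := ε / (2 * (‖v‖ + 1))
  have hη : 0 < η := by positivity
  obtain ⟨ρ, hρ, hρI⟩ : ∃ ρ > 0, ∀ t, |t - a| < ρ →
      t ∈ I ∧ φ a + r * (t - a) - η * |t - a| ≤ φ t := by
    have hlin := (hasDerivAt_iff_isLittleO.mp hφ).bound hη
    obtain ⟨ρ, hρ, hball⟩ := Metric.eventually_nhds_iff.mp (Filter.Eventually.and hI hlin)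
    refine ⟨ρ, hρ, fun t ht => ?_⟩
    obtain ⟨htI, hlin⟩ := hball (by rwa [Real.dist_eq])
    simp only [Real.norm_eq_abs, smul_eq_mul] at hlin
    exact ⟨htI, by linarith [neg_abs_le (φ t - φ a - (t - a) * r)]⟩
  set ε₁ := min 1 (ε / (2 * (|r| + 1)))
  have hε₁ : 0 < ε₁ := lt_min one_pos (by positivity)
  obtain ⟨δ₁, hδ₁, hsub⟩ := hv ε₁ hε₁
  refine ⟨min δ₁ (ρ / (‖v‖ + 1)), lt_min hδ₁ (by positivity), fun u hu hne => ?_⟩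
  set d := ‖u - x‖
  set k := inner ℝ v (u - x) - ε₁ * d
  have hk : |k| ≤ (‖v‖ + 1) * d := by
    have hinner := abs_real_inner_le_norm v (u - x)
    have hε₁1 : ε₁ ≤ 1 := min_le_left _ _
    rw [abs_le] at hinner ⊢
    constructor <;> nlinarith [norm_nonneg (u - x)]
  have hkρ : |k| < ρ := by
    have hd : d < ρ / (‖v‖ + 1) := lt_of_lt_of_le hu (min_le_right _ _)
    rw [lt_div_iff₀ (by positivity)] at hd
    linarith
  obtain ⟨hkI, hφk⟩ := hρI (a + k) (by simpa using hkρ)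
  have hfu : ((a + k : ℝ) : EReal) ≤ f u := by
    have := hsub u (lt_of_lt_of_le hu (min_le_left _ _)) hne
    rwa [hfx, ← EReal.coe_add] at this
  have hrε₁ : r * ε₁ ≤ ε / 2 := calc
    r * ε₁ ≤ (|r| + 1) * ε₁ := by nlinarith [le_abs_self r]
    _ ≤ (|r| + 1) * (ε / (2 * (|r| + 1))) := by gcongr; exact min_le_right _ _
    _ = ε / 2 := by field_simp
  have hηk : η * |k| ≤ ε / 2 * d := calc
    η * |k| ≤ η * ((‖v‖ + 1) * d) := by gcongr
    _ = ε / 2 * d := by simp only [η]; field_simp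
  -- `f u` lies above the level `a + k`, so `h u ≥ φ (a + k) ≥ φ a + r * k - η * |k|`
  refine le_trans ?_ (hle u (a + k) hkI hfu)
  rw [hhx, real_inner_smul_left, ← EReal.coe_add, EReal.coe_le_coe_iff]
  simp only [add_sub_cancel_left] at hφk
  nlinarith [norm_nonneg (u - x)]

lemma smul_mem_limSubgrad_of_hasDerivAt {f h : En n → EReal} {φ φ' : ℝ → ℝ} {I : Set ℝ}
    {x v : En n} {a : ℝ} (hI : IsOpen I) (hφ : ∀ t ∈ I, HasDerivAt φ (φ' t) t)
    (hφ' : ContinuousOn φ' I) (hh : ∀ y, ∀ t ∈ I, f y = t → h y = φ t)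
    (hle : ∀ u, ∀ t ∈ I, (t : EReal) ≤ f u → (φ t : EReal) ≤ h u)
    (ha : a ∈ I) (hfx : f x = a) (hv : v ∈ LimSubgrad f x) :
    φ' a • v ∈ LimSubgrad h x := by
  obtain ⟨xk, vk, hxk, hvk, hfk, hreg⟩ := hv
  rw [hfx] at hfk
  set b := fun k => (f (xk k)).toReal
  have hb : Tendsto b atTop (𝓝 a) :=
    (EReal.tendsto_toReal (EReal.coe_ne_top a) (EReal.coe_ne_bot a)).comp hfk
  have hfb : ∀ᶠ k in atTop, f (xk k) = b k := by
    filter_upwards [hfk.eventually_ne (EReal.coe_ne_top a),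
      hfk.eventually_ne (EReal.coe_ne_bot a)] with k htop hbot
    exact (EReal.coe_toReal htop hbot).symm
  have hbI : ∀ᶠ k in atTop, b k ∈ I := hb (hI.mem_nhds ha)
  have hhk : Tendsto (fun k => h (xk k)) atTop (𝓝 (h x)) := by
    rw [hh x a ha hfx]
    refine (EReal.tendsto_coe.mpr ((hφ a ha).continuousAt.tendsto.comp hb)).congr' ?_
    filter_upwards [hfb, hbI] with k hk hkI
    exact (hh _ _ hkI hk).symm
  refine mem_limSubgrad_of_eventually hxk
    (((hφ'.continuousAt (hI.mem_nhds ha)).tendsto.comp hb).smul hvk) hhk ?_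
  filter_upwards [hfb, hbI] with k hk hkI
  exact smul_mem_regSubgrad_of_hasDerivAt (hφ _ hkI) (hI.mem_nhds hkI) hk (hh _ _ hkI hk) hle
    (hreg k)

lemma liminf_distZero_limSubgrad_le (G : En n → EReal) (x : En n) :
    liminf (fun y => DistZero (LimSubgrad G y)) (𝓝 x ⊓ comap G (𝓝[>] (G x))) ≤
      DistZero (OuterSubgrad G x) := by
  refine Metric.le_infEDist.mpr fun v hv => ?_
  obtain ⟨xk, vk, hxk, hvk, hlim⟩ := tendsto_of_mem_outerSubgrad hv
  calc liminf (fun y => DistZero (LimSubgrad G y)) (𝓝 x ⊓ comap G (𝓝[>] (G x)))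
      ≤ liminf (fun k => DistZero (LimSubgrad G (xk k))) atTop := hxk.liminf_le_liminf_comp
    _ ≤ liminf (fun k => edist 0 (vk k)) atTop :=
      liminf_le_liminf (.of_forall fun k => Metric.infEDist_le_edist_of_mem (hlim k))
    _ = edist 0 v := (tendsto_const_nhds.edist hvk).liminf_eq

lemma exists_seq_mem_edist_le_distZero_add_inv {S : ℕ → Set (En n)}
    (hS : ∀ᶠ k in atTop, DistZero (S k) ≠ ⊤) :
    ∃ vk : ℕ → En n,
      ∀ᶠ k in atTop, vk k ∈ S k ∧ edist 0 (vk k) ≤ DistZero (S k) + (k : ℝ≥0∞)⁻¹ := by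
  have hnear : ∀ k, ∃ w, DistZero (S k) ≠ ⊤ →
      w ∈ S k ∧ edist 0 w ≤ DistZero (S k) + (k : ℝ≥0∞)⁻¹ := by
    intro k
    by_cases hk : DistZero (S k) = ⊤
    · exact ⟨0, fun h => absurd hk h⟩
    obtain ⟨w, hw, hlt⟩ := Metric.infEDist_lt_iff.mp
      (ENNReal.lt_add_right hk (ENNReal.inv_ne_zero.mpr (ENNReal.natCast_ne_top k)))
    exact ⟨w, fun _ => ⟨hw, hlt.le⟩⟩
  choose vk hvk using hnear
  exact ⟨vk, hS.mono hvk⟩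

lemma distZero_outerSubgrad_le_liminf (G : En n → EReal) (x : En n) :
    DistZero (OuterSubgrad G x) ≤
      liminf (fun y => DistZero (LimSubgrad G y)) (𝓝 x ⊓ comap G (𝓝[>] (G x))) := by
  set F := 𝓝 x ⊓ comap G (𝓝[>] (G x))
  set D := fun y => DistZero (LimSubgrad G y)
  rcases F.eq_or_neBot with hF | hF
  · simp [hF]
  set L := liminf D F
  rcases eq_top_or_lt_top L with hL | hL
  · simp [hL]
  obtain ⟨xk, hD, hxk⟩ := exists_seq_tendsto_liminf (f := F) (u := D)
  have hDk : Tendsto (fun k => D (xk k) + (k : ℝ≥0∞)⁻¹) atTop (𝓝 L) := by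
    simpa using hD.add ENNReal.tendsto_inv_nat_nhds_zero
  have hbound : ∀ᶠ k in atTop, D (xk k) + (k : ℝ≥0∞)⁻¹ < L + 1 :=
    hDk.eventually (gt_mem_nhds (ENNReal.lt_add_right hL.ne one_ne_zero))
  obtain ⟨vk, hvk⟩ := exists_seq_mem_edist_le_distZero_add_inv
    (hbound.mono fun k hk => ne_top_of_lt (lt_of_le_of_lt le_self_add hk))
  have hgood : ∀ᶠ k in atTop, vk k ∈ LimSubgrad G (xk k) ∧
      edist 0 (vk k) ≤ D (xk k) + (k : ℝ≥0∞)⁻¹ ∧ vk k ∈ Metric.ball 0 (L + 1).toReal := by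
    filter_upwards [hbound, hvk] with k hk ⟨hmem, hle⟩
    refine ⟨hmem, hle, ?_⟩
    rw [Metric.mem_ball, dist_comm, dist_edist]
    exact ENNReal.toReal_strict_mono (ENNReal.add_ne_top.mpr ⟨hL.ne, ENNReal.one_ne_top⟩)
      (hle.trans_lt hk)
  obtain ⟨v, -, φ, hφ, hv⟩ := tendsto_subseq_of_frequently_bounded Metric.isBounded_ball
    (hgood.mono fun k hk => hk.2.2).frequently
  replace hφ := hφ.tendsto_atTop
  have hvOuter : v ∈ OuterSubgrad G x :=
    mem_outerSubgrad_of_tendsto (hxk.comp hφ) hv (hφ.eventually (hgood.mono fun k hk => hk.1))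
  calc DistZero (OuterSubgrad G x) ≤ edist 0 v := Metric.infEDist_le_edist_of_mem hvOuter
    _ ≤ L := le_of_tendsto_of_tendsto (tendsto_const_nhds.edist hv) (hDk.comp hφ)
      (hφ.eventually (hgood.mono fun k hk => hk.2.1))

theorem liminf_distZero_limSubgrad (G : En n → EReal) (x : En n) :
    liminf (fun y => DistZero (LimSubgrad G y)) (𝓝 x ⊓ comap G (𝓝[>] (G x))) =
      DistZero (OuterSubgrad G x) :=
  (liminf_distZero_limSubgrad_le G x).antisymm (distZero_outerSubgrad_le_liminf G x)

lemma distZero_smul {r : ℝ} (hr : 0 < r) (S : Set (En n)) :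
    DistZero (r • S) = ENNReal.ofReal r * DistZero S := by
  have h := infEDist_smul₀ hr.ne' S (0 : En n)
  rw [smul_zero] at h
  change Metric.infEDist 0 (r • S) = ENNReal.ofReal r * Metric.infEDist 0 S
  rw [h, ENNReal.smul_def, smul_eq_mul, ← Real.enorm_of_nonneg hr.le]
  rfl

def rpowExcess (c θ : ℝ) (y : EReal) : EReal :=
  if y = ⊤ then (⊤ : EReal) else (((max (y - (c : ℝ)).toReal 0 : ℝ) ^ (1 - θ) : ℝ) : EReal)

section rpowExcess

variable {c θ : ℝ}

@[simp] lemma rpowExcess_top : rpowExcess c θ ⊤ = ⊤ := by simp [rpowExcess]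

@[simp] lemma rpowExcess_coe (b : ℝ) :
    rpowExcess c θ b = ((max (b - c) 0 ^ (1 - θ) : ℝ) : EReal) := by
  simp [rpowExcess, ← EReal.coe_sub]

lemma rpowExcess_bot (hθ : θ < 1) : rpowExcess c θ ⊥ = 0 := by
  simp [rpowExcess, Real.zero_rpow (sub_ne_zero.mpr hθ.ne')]

lemma rpowExcess_coe_add {s : ℝ} (hs : 0 ≤ s) :
    rpowExcess c θ ((c + s : ℝ) : EReal) = ((s ^ (1 - θ) : ℝ) : EReal) := by
  rw [rpowExcess_coe, add_sub_cancel_left, max_eq_left hs]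

lemma rpowExcess_mono (hθ : θ < 1) : Monotone (rpowExcess c θ) := by
  intro y z hyz
  induction z with
  | bot => rw [le_bot_iff.mp hyz]
  | top => simp
  | coe b =>
    induction y with
    | bot => rw [rpowExcess_bot hθ, rpowExcess_coe]; exact_mod_cast by positivity
    | top => exact absurd hyz (by simp)
    | coe a =>
      simp only [rpowExcess_coe, EReal.coe_le_coe_iff] at hyz ⊢
      gcongr

lemma rpowExcess_pos_iff (hθ : θ < 1) {y : EReal} : 0 < rpowExcess c θ y ↔ (c : EReal) < y := by
  induction y with
  | bot => simp [rpowExcess_bot hθ]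
  | top => simp
  | coe b =>
    rw [rpowExcess_coe, EReal.coe_pos, EReal.coe_lt_coe_iff]
    refine ⟨fun h => ?_, fun h => Real.rpow_pos_of_pos (lt_max_of_lt_left (sub_pos.mpr h)) _⟩
    by_contra hcb
    rw [max_eq_right (by linarith), Real.zero_rpow (by linarith)] at h
    exact h.false

lemma coe_le_of_le_rpowExcess (hθ : θ < 1) {s : ℝ} (hs : 0 < s) {y : EReal}
    (h : (s : EReal) ≤ rpowExcess c θ y) : ((c + s ^ (1 - θ)⁻¹ : ℝ) : EReal) ≤ y := by
  induction y with
  | bot => rw [rpowExcess_bot hθ] at h; exact absurd h (by exact_mod_cast hs.not_ge)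
  | top => exact le_top
  | coe b =>
    rw [rpowExcess_coe, EReal.coe_le_coe_iff] at h
    rw [EReal.coe_le_coe_iff]
    have hmax : s ^ (1 - θ)⁻¹ ≤ max (b - c) 0 := calc
      s ^ (1 - θ)⁻¹ ≤ (max (b - c) 0 ^ (1 - θ)) ^ (1 - θ)⁻¹ :=
        Real.rpow_le_rpow hs.le h (inv_nonneg.mpr (by linarith))
      _ = max (b - c) 0 := Real.rpow_rpow_inv (le_max_right _ _) (by linarith)
    have hpos : 0 < s ^ (1 - θ)⁻¹ := Real.rpow_pos_of_pos hs _
    rcases le_max_iff.mp hmax with h' | h' <;> linarith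

lemma eq_of_rpowExcess_eq (hθ : θ < 1) {s : ℝ} (hs : 0 < s) {y : EReal}
    (h : rpowExcess c θ y = s) : y = ((c + s ^ (1 - θ)⁻¹ : ℝ) : EReal) := by
  have hy : (c : EReal) < y := (rpowExcess_pos_iff hθ).mp (by rw [h]; exact_mod_cast hs)
  induction y with
  | bot => exact absurd hy (by simp)
  | top => simp at h
  | coe b =>
    have hb : 0 ≤ b - c := sub_nonneg.mpr (EReal.coe_lt_coe_iff.mp hy).le
    rw [rpowExcess_coe, EReal.coe_eq_coe_iff, max_eq_left hb] at h
    rw [← h, Real.rpow_rpow_inv hb (by linarith), add_sub_cancel]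

end rpowExcess

lemma comap_rpowExcess_nhdsGT {c θ : ℝ} (hθ : θ < 1) :
    comap (rpowExcess c θ) (𝓝[>] 0) = 𝓝[>] (c : EReal) := by
  have hθ' : 0 < 1 - θ := sub_pos.mpr hθ
  refine le_antisymm (fun U hU => ?_) (tendsto_iff_comap.mp ?_)
  · obtain ⟨w, hcw, hwU⟩ := (nhdsGT_basis_of_exists_gt ⟨⊤, EReal.coe_lt_top c⟩).mem_iff.mp hU
    obtain ⟨q, hcq, hqw⟩ := EReal.lt_iff_exists_real_btwn.mp hcw
    have hs : 0 < q - c := sub_pos.mpr (EReal.coe_lt_coe_iff.mp hcq)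
    refine mem_of_superset (preimage_mem_comap (Ioo_mem_nhdsGT
      (EReal.coe_pos.mpr (Real.rpow_pos_of_pos hs (1 - θ))))) fun y ⟨hy0, hys⟩ => hwU ⟨?_, ?_⟩
    · exact (rpowExcess_pos_iff hθ).mp hy0
    · rw [← rpowExcess_coe_add hs.le, add_sub_cancel] at hys
      exact lt_of_lt_of_le (lt_of_not_ge fun h => hys.not_ge (rpowExcess_mono hθ h)) hqw.le
  · refine (nhdsGT_basis_of_exists_gt ⟨⊤, EReal.zero_lt_top⟩).tendsto_right_iff.mpr fun u hu => ?_
    obtain ⟨q, hq0, hqu⟩ := EReal.lt_iff_exists_real_btwn.mp hu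
    have hq : 0 < q := EReal.coe_pos.mp hq0
    have hs : 0 < q ^ (1 - θ)⁻¹ := Real.rpow_pos_of_pos hq _
    filter_upwards [Ioo_mem_nhdsGT (EReal.coe_lt_coe_iff.mpr (lt_add_of_pos_right c hs))]
      with y ⟨hcy, hys⟩
    refine ⟨(rpowExcess_pos_iff hθ).mpr hcy, lt_of_le_of_lt (rpowExcess_mono hθ hys.le) ?_⟩
    rwa [rpowExcess_coe_add hs.le, Real.rpow_inv_rpow hq.le hθ'.ne']

lemma nhds_inf_comap_nhdsGT_rpowExcess {c θ : ℝ} (hθ : θ < 1) (f : En n → EReal)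
    {xb : En n} (hfc : f xb = c) :
    𝓝 xb ⊓ comap (fun x => rpowExcess c θ (f x)) (𝓝[>] (rpowExcess c θ (f xb))) =
      (𝓝 xb ⊓ comap f (𝓝 (f xb))) ⊓ 𝓟 {x | (c : EReal) < f x} := by
  have h0 : rpowExcess c θ (f xb) = 0 := by
    rw [hfc, rpowExcess_coe, sub_self, max_self, Real.zero_rpow (sub_ne_zero.mpr hθ.ne'),
      EReal.coe_zero]
  change 𝓝 xb ⊓ comap (rpowExcess c θ ∘ f) _ = _
  rw [h0, ← comap_comap, comap_rpowExcess_nhdsGT hθ, nhdsWithin, comap_inf,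
    comap_principal, inf_assoc, hfc]
  rfl

section ChainRule

variable {f : En n → EReal} {c θ : ℝ} {x : En n} {b : ℝ}

lemma smul_mem_limSubgrad_rpowExcess_comp (hθ : θ < 1) (hb : c < b) (hfx : f x = b)
    {v : En n} (hv : v ∈ LimSubgrad f x) :
    ((1 - θ) * (b - c) ^ (-θ)) • v ∈ LimSubgrad (fun y => rpowExcess c θ (f y)) x := by
  refine smul_mem_limSubgrad_of_hasDerivAt (φ := fun t => (t - c) ^ (1 - θ))
    (φ' := fun t => (1 - θ) * (t - c) ^ (-θ)) isOpen_Ioi (fun t ht => ?_) ?_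
    (fun y t ht hy => ?_) (fun u t ht hu => ?_) hb hfx hv
  · simpa [show 1 - θ - 1 = -θ by ring] using
      ((hasDerivAt_id t).sub_const c).rpow_const (p := 1 - θ) (Or.inl (sub_pos.mpr ht).ne')
  · exact continuousOn_const.mul
      ((continuousOn_id.sub continuousOn_const).rpow_const fun t ht => Or.inl (sub_pos.mpr ht).ne')
  · rw [hy, rpowExcess_coe, max_eq_left (sub_pos.mpr ht).le]
  · calc (((t - c) ^ (1 - θ) : ℝ) : EReal) = rpowExcess c θ t := by
          rw [rpowExcess_coe, max_eq_left (sub_pos.mpr ht).le]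
      _ ≤ rpowExcess c θ (f u) := rpowExcess_mono hθ hu

lemma smul_mem_limSubgrad_of_rpowExcess_comp (hθ : θ < 1) (hb : c < b) (hfx : f x = b)
    {w : En n} (hw : w ∈ LimSubgrad (fun y => rpowExcess c θ (f y)) x) :
    ((1 - θ) * (b - c) ^ (-θ))⁻¹ • w ∈ LimSubgrad f x := by
  have hθ' : 1 - θ ≠ 0 := (sub_pos.mpr hθ).ne'
  have hbc : 0 < b - c := sub_pos.mpr hb
  have hgx : rpowExcess c θ (f x) = ((b - c) ^ (1 - θ) : ℝ) := by
    rw [hfx, rpowExcess_coe, max_eq_left hbc.le]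
  have hderiv : (1 - θ)⁻¹ * ((b - c) ^ (1 - θ)) ^ ((1 - θ)⁻¹ - 1) =
      ((1 - θ) * (b - c) ^ (-θ))⁻¹ := by
    rw [← Real.rpow_mul hbc.le, mul_inv, Real.rpow_neg hbc.le, inv_inv]
    congr 2
    field_simp
    ring
  rw [← hderiv]
  refine smul_mem_limSubgrad_of_hasDerivAt (φ := fun s => c + s ^ (1 - θ)⁻¹)
    (φ' := fun s => (1 - θ)⁻¹ * s ^ ((1 - θ)⁻¹ - 1)) isOpen_Ioi
    (fun s hs => (Real.hasDerivAt_rpow_const (Or.inl (ne_of_gt hs))).const_add c) ?_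
    (fun y s hs hy => eq_of_rpowExcess_eq hθ hs hy)
    (fun u s hs hu => coe_le_of_le_rpowExcess hθ hs hu)
    (Real.rpow_pos_of_pos hbc _) hgx hw
  exact continuousOn_const.mul
    (continuousOn_id.rpow_const fun s hs => Or.inl (ne_of_gt hs))

lemma limSubgrad_rpowExcess_comp (hθ : θ < 1) (hb : c < b) (hfx : f x = b) :
    LimSubgrad (fun y => rpowExcess c θ (f y)) x =
      ((1 - θ) * (b - c) ^ (-θ)) • LimSubgrad f x := by
  have hr : (1 - θ) * (b - c) ^ (-θ) ≠ 0 :=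
    (mul_pos (sub_pos.mpr hθ) (Real.rpow_pos_of_pos (sub_pos.mpr hb) _)).ne'
  ext w
  refine ⟨fun hw => ?_, ?_⟩
  · rw [← smul_inv_smul₀ hr w]
    exact Set.smul_mem_smul_set (smul_mem_limSubgrad_of_rpowExcess_comp hθ hb hfx hw)
  · rintro ⟨v, hv, rfl⟩
    exact smul_mem_limSubgrad_rpowExcess_comp hθ hb hfx hv

end ChainRule

lemma klQuotient_eq_distZero_limSubgrad_rpowExcess_comp {f : En n → EReal} {c θ : ℝ}
    (hθ : θ < 1) {x : En n} (hx : f x ∈ Set.Ioo (c : EReal) ⊤) :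
    ENNReal.ofReal (1 - θ) * DistZero (LimSubgrad f x) /
        ENNReal.ofReal ((f x - (c : ℝ)).toReal ^ θ) =
      DistZero (LimSubgrad (fun y => rpowExcess c θ (f y)) x) := by
  obtain ⟨b, hfx⟩ : ∃ b : ℝ, f x = b :=
    ⟨_, (EReal.coe_toReal hx.2.ne (ne_bot_of_gt hx.1)).symm⟩
  have hb : c < b := EReal.coe_lt_coe_iff.mp (hfx ▸ hx.1)
  have hbc : 0 < b - c := sub_pos.mpr hb
  have hθ' : 0 < 1 - θ := sub_pos.mpr hθ
  rw [limSubgrad_rpowExcess_comp hθ hb hfx,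
    distZero_smul (mul_pos hθ' (Real.rpow_pos_of_pos hbc _)), hfx, ← EReal.coe_sub,
    EReal.toReal_coe, ENNReal.ofReal_mul hθ'.le, Real.rpow_neg hbc.le,
    ENNReal.ofReal_inv_of_pos (Real.rpow_pos_of_pos hbc _), div_eq_mul_inv]
  ring

end

theorem statement_4_general {n : ℕ} (f : En n → EReal)
    (xb : En n) (c : ℝ) (hfc : f xb = (c : ℝ))
    (θ : ℝ) (hθ1 : θ < 1)
    (g : En n → EReal)
    (hg : g = fun x => if f x = ⊤ then (⊤ : EReal)
      else (((max (f x - (c : ℝ)).toReal 0 : ℝ) ^ (1 - θ) : ℝ) : EReal)) :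
    Filter.liminf
        (fun x : En n =>
          ENNReal.ofReal (1 - θ) * DistZero (LimSubgrad f x) /
            ENNReal.ofReal ((f x - (c : ℝ)).toReal ^ θ))
        ((nhds xb ⊓ Filter.comap f (nhds (f xb))) ⊓
          Filter.principal {x : En n | (c : EReal) < f x}) =
      DistZero (OuterSubgrad g xb) := by
  obtain rfl : g = fun x => rpowExcess c θ (f x) := hg
  have hfinite : ∀ᶠ x in (𝓝 xb ⊓ comap f (𝓝 (f xb))) ⊓ 𝓟 {x | (c : EReal) < f x},
      f x ∈ Set.Ioo (c : EReal) ⊤ := by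
    have hlt : {x | f x < ⊤} ∈ comap f (𝓝 (f xb)) :=
      preimage_mem_comap (Iio_mem_nhds (hfc ▸ EReal.coe_lt_top c))
    filter_upwards [mem_inf_of_left (mem_inf_of_right hlt), mem_inf_of_right (mem_principal_self _)]
      with x hx hcx using ⟨hcx, hx⟩
  rw [liminf_congr (hfinite.mono fun x hx =>
      klQuotient_eq_distZero_limSubgrad_rpowExcess_comp hθ1 hx),
    ← nhds_inf_comap_nhdsGT_rpowExcess hθ1 f hfc, liminf_distZero_limSubgrad]

/-- the KŁ modulus (a liminf of normalized subgradient distances)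
equals the distance from `0` to the outer limiting subdifferential of
`g = (max{f - f(xb),0})^{1-θ}` at `xb`. -/
theorem statement_4 {n : ℕ} (f : En n → EReal) (hbot : ∀ x, f x ≠ ⊥)
    (xb : En n) (c : ℝ) (hfc : f xb = (c : ℝ)) (hloc : LocallyLsc f xb)
    (θ : ℝ) (hθ0 : 0 ≤ θ) (hθ1 : θ < 1)
    (g : En n → EReal)
    (hg : g = fun x => if f x = ⊤ then (⊤ : EReal)
      else (((max (f x - (c : ℝ)).toReal 0 : ℝ) ^ (1 - θ) : ℝ) : EReal)) :
    Filter.liminf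
        (fun x : En n =>
          ENNReal.ofReal (1 - θ) * DistZero (LimSubgrad f x) /
            ENNReal.ofReal ((f x - (c : ℝ)).toReal ^ θ))
        ((nhds xb ⊓ Filter.comap f (nhds (f xb))) ⊓
          Filter.principal {x : En n | (c : EReal) < f x}) =
      DistZero (OuterSubgrad g xb) :=
  statement_4_general f xb c hfc θ hθ1 g hg
end
end

section
/- Let f : ℝⁿ → ℝ ∪ {+∞} be finite and locally lower semicontinuous at x̄, and set h := df(x̄). If h is proper and positively homogeneous of degree 1, then ∂^> h(0) equals the closure of the union of ∂h(w) over all w with 0 < h(w) < +∞; in particular, ∂^> h(0) is nonempty if and only if the set W = {w : 0 < h(w) < +∞} is nonempty. -/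
open Filter Topology
open scoped ENNReal NNReal Pointwise

noncomputable section

/-- The (first) subderivative `df(x)(w)`. -/
def Subderiv {n : ℕ} (f : En n → EReal) (x : En n) (w : En n) : EReal :=
  Filter.liminf (fun p : ℝ × En n => ((p.1⁻¹ : ℝ) : EReal) * (f (x + p.1 • p.2) - f x))
    ((nhdsWithin 0 (Set.Ioi 0)) ×ˢ (nhds w))

/-
Homogeneity of `h` makes `∂h` constant along rays, so every `v ∈ ∂h(w)` with
`0 < h(w) < ∞` is an outer subgradient at `0`, approached along `t • w`, `t ↓ 0`; conversely
the values `h(w_k) → 0 < ∞` force `0 < h(w_k) < ∞` eventually. For the nonemptiness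
statement, a point with `0 < h(w) < ∞` yields a regular subgradient nearby: by lower
semicontinuity, `h + C‖· - w‖²` attains its minimum on a small closed ball at an interior
point where `h` stays positive and finite, and a proximal subgradient lives there.
-/

open Set

theorem lowerSemicontinuous_liminf_prod_nhds {α β γ : Type*} [TopologicalSpace β]
    [CompleteLinearOrder γ] [DenselyOrdered γ] (g : α × β → γ) (l : Filter α) :
    LowerSemicontinuous fun w => liminf g (l ×ˢ 𝓝 w) := by
  intro w₀ b hb
  obtain ⟨c, hbc, hc⟩ := exists_between hb
  obtain ⟨s, hs, t, ht, hst⟩ := eventually_prod_iff.1 (eventually_lt_of_lt_liminf hc)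
  filter_upwards [ht.eventually_nhds] with w hw
  exact hbc.trans_le <| le_liminf_of_le (by isBoundedDefault)
    ((hs.prod_mk hw).mono fun p hp => (hst hp.1 hp.2).le)

theorem lowerSemicontinuous_subderiv {n : ℕ} (f : En n → EReal) (x : En n) :
    LowerSemicontinuous (Subderiv f x) :=
  lowerSemicontinuous_liminf_prod_nhds _ _

section

variable {n : ℕ} {h : En n → EReal}

theorem regSubgrad_subset_limSubgrad (x : En n) : RegSubgrad h x ⊆ LimSubgrad h x :=
  fun v hv => ⟨fun _ => x, fun _ => v, tendsto_const_nhds, tendsto_const_nhds,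
    tendsto_const_nhds, fun _ => hv⟩

theorem outerSubgrad_subset_closure {x : En n} (hx : h x ≠ ⊤) :
    OuterSubgrad h x ⊆ closure (⋃ w ∈ {w | h x < h w ∧ h w < ⊤}, LimSubgrad h w) := by
  rintro v ⟨xk, vk, -, hvk, hval, hgt, hsub⟩
  apply mem_closure_of_tendsto hvk
  filter_upwards [hval.eventually_lt_const hx.lt_top] with k hk
  exact mem_biUnion ⟨hgt k, hk⟩ (hsub k)

theorem mem_regSubgrad_of_isLocalMin_add_sq_norm {w u₀ : En n} {C : ℝ} (hC : 0 < C)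
    (hmin : IsLocalMin (fun u => h u + ((C * ‖u - w‖ ^ 2 : ℝ) : EReal)) u₀) :
    (2 * C) • (w - u₀) ∈ RegSubgrad h u₀ := by
  intro ε hε
  obtain ⟨ρ, hρ, hball⟩ := Metric.eventually_nhds_iff.1 hmin
  refine ⟨min ρ (ε / C), lt_min hρ (div_pos hε hC), fun u hu _ => ?_⟩
  have hquad : inner ℝ ((2 * C) • (w - u₀)) (u - u₀) - ε * ‖u - u₀‖
      ≤ C * ‖u₀ - w‖ ^ 2 + -(C * ‖u - w‖ ^ 2) := by
    have hexp : ‖u - w‖ ^ 2 = ‖u₀ - w‖ ^ 2 + 2 * inner ℝ (u₀ - w) (u - u₀) + ‖u - u₀‖ ^ 2 := by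
      rw [show u - w = (u₀ - w) + (u - u₀) by abel]
      exact norm_add_sq_real _ _
    have hinner : inner ℝ ((2 * C) • (w - u₀)) (u - u₀) = -(2 * C) * inner ℝ (u₀ - w) (u - u₀) := by
      rw [real_inner_smul_left, ← neg_sub, inner_neg_left]
      ring
    have hsmall : C * ‖u - u₀‖ ^ 2 ≤ ε * ‖u - u₀‖ := by
      have := (lt_div_iff₀' hC).1 (lt_of_lt_of_le hu (min_le_right _ _))
      nlinarith [norm_nonneg (u - u₀)]
    rw [hexp, hinner]
    linarith
  calc h u₀ + ((inner ℝ ((2 * C) • (w - u₀)) (u - u₀) - ε * ‖u - u₀‖ : ℝ) : EReal)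
      ≤ h u₀ + ((C * ‖u₀ - w‖ ^ 2 + -(C * ‖u - w‖ ^ 2) : ℝ) : EReal) := by
        gcongr
    _ = (h u₀ + ((C * ‖u₀ - w‖ ^ 2 : ℝ) : EReal)) + ((-(C * ‖u - w‖ ^ 2) : ℝ) : EReal) := by
        rw [EReal.coe_add, add_assoc]
    _ ≤ (h u + ((C * ‖u - w‖ ^ 2 : ℝ) : EReal)) + ((-(C * ‖u - w‖ ^ 2) : ℝ) : EReal) := by
        exact add_le_add (hball (lt_of_lt_of_le hu (min_le_left _ _))) le_rfl
    _ = h u := by rw [add_assoc, ← EReal.coe_add, add_neg_cancel, EReal.coe_zero, add_zero]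

theorem exists_isLocalMin_add_sq_norm (hlsc : LowerSemicontinuous h) {w : En n}
    (hw₀ : 0 < h w) (hw : h w < ⊤) :
    ∃ u₀, (0 < h u₀ ∧ h u₀ < ⊤) ∧
      ∃ C > (0 : ℝ), IsLocalMin (fun u => h u + ((C * ‖u - w‖ ^ 2 : ℝ) : EReal)) u₀ := by
  obtain ⟨c, hc⟩ : ∃ c : ℝ, h w = c := ⟨_, (EReal.coe_toReal hw.ne hw₀.ne_bot).symm⟩
  have hc₀ : 0 < c := by exact_mod_cast hc ▸ hw₀
  obtain ⟨r, hr, hball⟩ := Metric.nhds_basis_closedBall.eventually_iff.1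
    (hlsc w _ (show ((c / 2 : ℝ) : EReal) < h w by rw [hc]; exact_mod_cast half_lt_self hc₀))
  set C := c / r ^ 2
  set φ := fun u => h u + ((C * ‖u - w‖ ^ 2 : ℝ) : EReal)
  have hφ : LowerSemicontinuous φ := by
    refine hlsc.add' (continuous_coe_real_ereal.comp (by fun_prop)).lowerSemicontinuous
      fun x => EReal.continuousAt_add (.inr (EReal.coe_ne_bot _)) (.inr (EReal.coe_ne_top _))
  obtain ⟨u₀, hu₀, hmin⟩ := (hφ.lowerSemicontinuousOn _).exists_isMinOn
    ⟨w, Metric.mem_closedBall_self hr.le⟩ (isCompact_closedBall w r)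
  have hφu₀ : φ u₀ ≤ c := by
    simpa [φ, hc] using hmin (Metric.mem_closedBall_self hr.le)
  have hlow : ((c / 2 : ℝ) : EReal) < h u₀ := hball hu₀
  have hu₀top : h u₀ ≠ ⊤ := fun htop => by
    simp only [φ, htop, EReal.top_add_coe, top_le_iff] at hφu₀
    exact EReal.coe_ne_top c hφu₀
  obtain ⟨a, ha⟩ : ∃ a : ℝ, h u₀ = a := ⟨_, (EReal.coe_toReal hu₀top hlow.ne_bot).symm⟩
  rw [ha, EReal.coe_lt_coe_iff] at hlow
  have hreal : a + C * ‖u₀ - w‖ ^ 2 ≤ c := by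
    simpa only [φ, ha, ← EReal.coe_add, EReal.coe_le_coe_iff] using hφu₀
  -- `C = c / r²` makes `φ u₀ ≤ φ w = c` and `h u₀ > c / 2` give `C ‖u₀ - w‖² < c / 2 < C r²`
  have hinside : ‖u₀ - w‖ < r := by
    have hCr : C * r ^ 2 = c := div_mul_cancel₀ c (by positivity)
    have hsq : C * ‖u₀ - w‖ ^ 2 < C * r ^ 2 := by linarith
    exact lt_of_pow_lt_pow_left₀ 2 hr.le (lt_of_mul_lt_mul_left hsq (by positivity))
  refine ⟨u₀, ⟨?_, ha ▸ EReal.coe_lt_top a⟩, C, by positivity, hmin.isLocalMin ?_⟩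
  · rw [ha]; exact_mod_cast (by linarith : 0 < a)
  · exact mem_of_superset (Metric.isOpen_ball.mem_nhds (by rwa [Metric.mem_ball, dist_eq_norm]))
      Metric.ball_subset_closedBall

theorem nonempty_biUnion_limSubgrad_iff (hlsc : LowerSemicontinuous h) :
    (⋃ w ∈ {w | (0 : EReal) < h w ∧ h w < ⊤}, LimSubgrad h w).Nonempty ↔
      {w | (0 : EReal) < h w ∧ h w < ⊤}.Nonempty := by
  refine ⟨fun hne => ?_, fun ⟨w, hw₀, hw⟩ => ?_⟩
  · obtain ⟨w, hw, -⟩ := nonempty_biUnion.1 hne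
    exact ⟨w, hw⟩
  · obtain ⟨u₀, hu₀, C, hC, hmin⟩ := exists_isLocalMin_add_sq_norm hlsc hw₀ hw
    exact nonempty_biUnion.2
      ⟨u₀, hu₀, _,
        regSubgrad_subset_limSubgrad u₀ (mem_regSubgrad_of_isLocalMin_add_sq_norm hC hmin)⟩

def IsPosHomogeneous {n : ℕ} (h : En n → EReal) : Prop :=
  ∀ l : ℝ, 0 < l → ∀ w : En n, h (l • w) = ((l : ℝ) : EReal) * h w

namespace IsPosHomogeneous

variable (hh : IsPosHomogeneous h)
include hh

theorem regSubgrad_subset_smul {l : ℝ} (hl : 0 < l) (x : En n) :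
    RegSubgrad h x ⊆ RegSubgrad h (l • x) := by
  intro v hv ε hε
  obtain ⟨δ, hδ, hineq⟩ := hv ε hε
  refine ⟨l * δ, mul_pos hl hδ, fun u hu hne => ?_⟩
  have hu_eq : u = l • l⁻¹ • u := (smul_inv_smul₀ hl.ne' u).symm
  have hdiff : u - l • x = l • (l⁻¹ • u - x) := by rw [smul_sub, ← hu_eq]
  have hnorm : ‖u - l • x‖ = l * ‖l⁻¹ • u - x‖ := by
    rw [hdiff, norm_smul, Real.norm_of_nonneg hl.le]
  have hscaled := mul_le_mul_of_nonneg_left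
    (hineq (l⁻¹ • u) (lt_of_mul_lt_mul_left (hnorm ▸ hu) hl.le)
      fun h' => hne (by rw [hu_eq, h']))
    (EReal.coe_nonneg.2 hl.le)
  rw [EReal.left_distrib_of_nonneg_of_ne_top (EReal.coe_nonneg.2 hl.le) (EReal.coe_ne_top l),
    ← hh l hl, ← hh l hl, ← hu_eq, ← EReal.coe_mul] at hscaled
  convert hscaled using 3
  rw [hdiff, real_inner_smul_right, norm_smul, Real.norm_of_nonneg hl.le]
  ring

theorem limSubgrad_subset_smul {l : ℝ} (hl : 0 < l) (x : En n) :
    LimSubgrad h x ⊆ LimSubgrad h (l • x) := by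
  rintro v ⟨xk, vk, hxk, hvk, hval, hsub⟩
  refine ⟨fun k => l • xk k, vk, hxk.const_smul l, hvk, ?_,
    fun k => hh.regSubgrad_subset_smul hl (xk k) (hsub k)⟩
  simp only [hh l hl]
  exact EReal.Tendsto.const_mul hval (.inl (EReal.coe_ne_bot l)) (.inl (EReal.coe_ne_top l))

theorem tendsto_apply_smul_nhdsGT_zero {w : En n} (hw : h w ≠ ⊤) (hw' : h w ≠ ⊥) :
    Tendsto (fun t : ℝ => h (t • w)) (𝓝[>] 0) (𝓝 0) := by
  have hmul : Tendsto (fun t : ℝ => (t : EReal) * h w) (𝓝[>] 0) (𝓝 (((0 : ℝ) : EReal) * h w)) :=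
    EReal.Tendsto.mul_const ((continuous_coe_real_ereal.tendsto 0).mono_left nhdsWithin_le_nhds)
      (.inr hw') (.inr hw)
  rw [EReal.coe_zero, zero_mul] at hmul
  exact hmul.congr' (eventually_nhdsWithin_of_forall fun t ht => (hh t ht w).symm)

theorem exists_pos_smul_lt {w : En n} (hw : h w ≠ ⊤) (hw' : h w ≠ ⊥) {ε : ℝ} (hε : 0 < ε) :
    ∃ t > (0 : ℝ), ‖t • w‖ < ε ∧ h (t • w) < ε := by
  have hnorm : Tendsto (fun t : ℝ => ‖t • w‖) (𝓝[>] 0) (𝓝 0) := by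
    exact ((continuous_id.smul continuous_const).norm.tendsto' 0 0 (by simp)).mono_left
      nhdsWithin_le_nhds
  obtain ⟨t, ⟨hnorm_lt, hval_lt⟩, ht⟩ := (((hnorm.eventually (gt_mem_nhds hε)).and
    ((hh.tendsto_apply_smul_nhdsGT_zero hw hw').eventually
      (gt_mem_nhds (EReal.coe_pos.2 hε)))).and self_mem_nhdsWithin).exists
  exact ⟨t, ht, hnorm_lt, hval_lt⟩

theorem closure_biUnion_limSubgrad_subset_outerSubgrad (h0 : h 0 = 0) :
    closure (⋃ w ∈ {w | (0 : EReal) < h w ∧ h w < ⊤}, LimSubgrad h w) ⊆ OuterSubgrad h 0 := by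
  intro v hv
  obtain ⟨vs, hvs, hlim⟩ := mem_closure_iff_seq_limit.1 hv
  simp only [mem_iUnion₂] at hvs
  choose ws hws hvsw using hvs
  choose t ht hnorm hval using fun j : ℕ =>
    hh.exists_pos_smul_lt (hws j).2.ne (hws j).1.ne_bot (Nat.one_div_pos_of_nat (n := j))
  have hpos : ∀ j, 0 < h (t j • ws j) := fun j => by
    rw [hh _ (ht j)]
    exact EReal.mul_pos (EReal.coe_pos.2 (ht j)) (hws j).1
  refine ⟨fun j => t j • ws j, vs,
    squeeze_zero_norm (fun j => (hnorm j).le) tendsto_one_div_add_atTop_nhds_zero_nat, hlim, ?_,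
    fun j => h0 ▸ hpos j, fun j => hh.limSubgrad_subset_smul (ht j) _ (hvsw j)⟩
  rw [h0]
  refine tendsto_of_tendsto_of_tendsto_of_le_of_le tendsto_const_nhds ?_
    (fun j => (hpos j).le) (fun j => (hval j).le)
  simpa [Function.comp_def] using
    (continuous_coe_real_ereal.tendsto 0).comp tendsto_one_div_add_atTop_nhds_zero_nat

end IsPosHomogeneous

end

theorem statement_6_general {n : ℕ} (f : En n → EReal)
    (xb : En n)
    (h : En n → EReal) (hh : h = fun w => Subderiv f xb w)
    (hproper : h 0 = 0)
    (hhomog : ∀ l : ℝ, 0 < l → ∀ w : En n, h (l • w) = ((l : ℝ) : EReal) * h w) :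
    OuterSubgrad h 0 =
        closure (⋃ w ∈ {w : En n | (0 : EReal) < h w ∧ h w < ⊤}, LimSubgrad h w) ∧
      ((OuterSubgrad h 0).Nonempty ↔
        {w : En n | (0 : EReal) < h w ∧ h w < ⊤}.Nonempty) := by
  have hlsc : LowerSemicontinuous h := hh ▸ lowerSemicontinuous_subderiv f xb
  have houter : OuterSubgrad h 0 =
      closure (⋃ w ∈ {w : En n | (0 : EReal) < h w ∧ h w < ⊤}, LimSubgrad h w) := by
    refine subset_antisymm ?_
      (IsPosHomogeneous.closure_biUnion_limSubgrad_subset_outerSubgrad hhomog hproper)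
    simpa only [hproper] using outerSubgrad_subset_closure (h := h) (x := 0) (by simp [hproper])
  refine ⟨houter, ?_⟩
  rw [houter, closure_nonempty_iff]
  exact nonempty_biUnion_limSubgrad_iff hlsc

/-- for a proper, positively homogeneous subderivative `h = df(xb)`,
`∂^> h(0)` is the closure of `⋃_{0 < h(w) < ∞} ∂h(w)`, and it is nonempty iff
`W = {w : 0 < h(w) < ∞}` is nonempty. -/
theorem statement_6 {n : ℕ} (f : En n → EReal) (hbot : ∀ x, f x ≠ ⊥)
    (xb : En n) (c : ℝ) (hfc : f xb = (c : ℝ)) (hloc : LocallyLsc f xb)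
    (h : En n → EReal) (hh : h = fun w => Subderiv f xb w)
    (hproper : h 0 = 0)
    (hhomog : ∀ l : ℝ, 0 < l → ∀ w : En n, h (l • w) = ((l : ℝ) : EReal) * h w) :
    OuterSubgrad h 0 =
        closure (⋃ w ∈ {w : En n | (0 : EReal) < h w ∧ h w < ⊤}, LimSubgrad h w) ∧
      ((OuterSubgrad h 0).Nonempty ↔
        {w : En n | (0 : EReal) < h w ∧ h w < ⊤}.Nonempty) :=
  statement_6_general f xb h hh hproper hhomog
end
end
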